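/- arXiv:1708.02921 — 5 statements merged into one kernel-verified Lean document; each statement's English description precedes it below -/
import Mathlib

section
/- The toric code C_b has length (q−1)² and dimension dim_{𝔽_q} C_b = (1/2)((q−2)/r + 1)·q + b·(q−1), i.e. its dimension equals the number of lattice points of □_b. -/
/-!
The monomials `t₁^i t₂^j` are characters of `𝔽_q^* × 𝔽_q^*`, and since `𝔽_q^*` is cyclic of
order `q - 1`, distinct exponent pairs in `[0, q-2]²` give distinct characters. The hypothesis
`b + (q-2)/r ≤ q-2` puts all lattice points of `□_b` in that box, so by Dedekind's independence
of characters the evaluation vectors are linearly independent and `dim C_b = #(□_b ∩ ℤ²)`.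
Writing `q - 2 = r s`, the polygon is `b` full columns of height `r s` next to a triangle with
legs `s` and `r s`; its lattice points are counted by adding one column at a time.
-/

/-- The toric code `C_b` over the finite field `F` with `q` elements: the `𝔽_q`-linear
span in `𝔽_q^S`, `S = 𝔽_q^* × 𝔽_q^*`, of the evaluation vectors `v_{(i,j)}` (with
coordinate `t₁^i · t₂^j` at `(t₁,t₂) ∈ S`) for `(i,j)` ranging over the lattice points
of the polytope `□_b`, i.e. the pairs `(i,j) ∈ ℤ²` with `i ≥ 0`, `0 ≤ j ≤ q-2` and
`r·i + j ≤ r·b + (q-2)`. -/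
def toricCode (F : Type*) [Field F] [Fintype F] (r b : ℕ) : Submodule F (Fˣ × Fˣ → F) :=
  Submodule.span F
    {f : Fˣ × Fˣ → F | ∃ i j : ℕ, j ≤ Fintype.card F - 2 ∧
      r * i + j ≤ r * b + (Fintype.card F - 2) ∧
      f = fun t : Fˣ × Fˣ => (t.1 : F) ^ i * (t.2 : F) ^ j}

open Finset

/-- `□_b ∩ ℤ²` is `latticePoints r (q - 2) (r * b + (q - 2))`. -/
def latticePoints (r m c : ℕ) : Finset (ℕ × ℕ) :=
  (range (c + 1) ×ˢ range (m + 1)).filter fun p => r * p.1 + p.2 ≤ c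

section latticePoints

variable {r : ℕ} (hr : 0 < r)
include hr

theorem mem_latticePoints {m c : ℕ} {p : ℕ × ℕ} :
    p ∈ latticePoints r m c ↔ p.2 ≤ m ∧ r * p.1 + p.2 ≤ c := by
  have : p.1 ≤ r * p.1 := Nat.le_mul_of_pos_left _ hr
  simp only [latticePoints, mem_filter, mem_product, mem_range]
  omega

theorem latticePoints_zero (m : ℕ) : latticePoints r m 0 = {(0, 0)} := by
  ext ⟨i, j⟩
  simp only [mem_latticePoints hr, mem_singleton, Prod.mk.injEq, Nat.le_zero, Nat.add_eq_zero_iff,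
    mul_eq_zero, hr.ne', false_or]
  omega

/-- Raising the bounding line by `r` shifts the old points one column right and adds
column `0`. -/
theorem card_latticePoints_add (m c : ℕ) :
    #(latticePoints r m (c + r)) = #(latticePoints r m c) + (min m (c + r) + 1) := by
  have hsplit : latticePoints r m (c + r) =
      (latticePoints r m c).image (Prod.map Nat.succ id) ∪ {0} ×ˢ range (min m (c + r) + 1) := by
    ext ⟨i, j⟩
    rcases i with _ | i
    · simp [mem_latticePoints hr]
    · simp [mem_latticePoints hr, mul_add]
      omega
  have hinj : Function.Injective (Prod.map Nat.succ (id : ℕ → ℕ)) :=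
    Nat.succ_injective.prodMap Function.injective_id
  rw [hsplit, card_union_of_disjoint, card_image_of_injective _ hinj, card_product, card_singleton,
    card_range, one_mul]
  simp only [disjoint_left, mem_image, mem_product, mem_singleton, Prod.exists, Prod.map]
  grind

theorem two_mul_card_latticePoints_triangle {s n : ℕ} (hn : n ≤ s) :
    2 * #(latticePoints r (r * s) (r * n)) = (n + 1) * (r * n + 2) := by
  induction n with
  | zero => simp [latticePoints_zero hr]
  | succ n ih =>
    have hle : r * n + r ≤ r * s := by
      simpa [mul_add] using Nat.mul_le_mul_left r hn
    rw [mul_add_one, card_latticePoints_add hr, min_eq_right hle, mul_add, ih (by omega)]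
    ring

theorem two_mul_card_latticePoints (s b : ℕ) :
    2 * #(latticePoints r (r * s) (r * (s + b))) = (s + 1) * (r * s + 2) + 2 * b * (r * s + 1) := by
  induction b with
  | zero => simpa using two_mul_card_latticePoints_triangle hr le_rfl
  | succ b ih =>
    have hle : r * s ≤ r * (s + b) + r := by
      have := Nat.mul_le_mul_left r (Nat.le_add_right s b)
      omega
    rw [← add_assoc, mul_add_one, card_latticePoints_add hr, min_eq_left hle, mul_add, ih]
    ring

end latticePoints

def monomialChar (M : Type*) [CommMonoid M] (i j : ℕ) : Mˣ × Mˣ →* M where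
  toFun t := (t.1 : M) ^ i * (t.2 : M) ^ j
  map_one' := by simp
  map_mul' x y := by
    simp only [Prod.fst_mul, Prod.snd_mul, Units.val_mul, mul_pow]
    exact mul_mul_mul_comm _ _ _ _

theorem eq_of_forall_pow_eq_pow {G : Type*} [Group G] [Finite G] [IsCyclic G] {i i' : ℕ}
    (hi : i < Nat.card G) (hi' : i' < Nat.card G) (h : ∀ g : G, g ^ i = g ^ i') : i = i' := by
  obtain ⟨g, hg⟩ := IsCyclic.exists_generator (α := G)
  have hmod := pow_eq_pow_iff_modEq.1 (h g)
  rw [orderOf_eq_card_of_forall_mem_zpowers hg] at hmod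
  exact hmod.eq_of_lt_of_lt hi hi'

section monomialChar

variable (F : Type*) [Field F] [Fintype F]

abbrev exponentBox : Set (ℕ × ℕ) :=
  {p | p.1 < Fintype.card F - 1 ∧ p.2 < Fintype.card F - 1}

theorem injOn_monomialChar :
    Set.InjOn (fun p : ℕ × ℕ => monomialChar F p.1 p.2) (exponentBox F) := by
  rintro ⟨i, j⟩ ⟨hi, hj⟩ ⟨i', j'⟩ ⟨hi', hj'⟩ h
  have hcard : Nat.card Fˣ = Fintype.card F - 1 := by
    rw [Nat.card_units, Nat.card_eq_fintype_card]
  have heval (t : Fˣ × Fˣ) := DFunLike.congr_fun h t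
  simp only [monomialChar, MonoidHom.coe_mk, OneHom.coe_mk] at heval
  rw [← hcard] at hi hj hi' hj'
  have hii : i = i' := eq_of_forall_pow_eq_pow hi hi' fun t => Units.ext (by simpa using heval (t, 1))
  have hjj : j = j' := eq_of_forall_pow_eq_pow hj hj' fun t => Units.ext (by simpa using heval (1, t))
  rw [hii, hjj]

theorem linearIndepOn_monomialChar :
    LinearIndepOn F (fun p : ℕ × ℕ => ⇑(monomialChar F p.1 p.2)) (exponentBox F) :=
  (linearIndependent_monoidHom _ F).comp _ (injOn_monomialChar F).injective

theorem finrank_span_monomialChar {s : Finset (ℕ × ℕ)} (hs : ↑s ⊆ exponentBox F) :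
    Module.finrank F
      (Submodule.span F ((fun p : ℕ × ℕ => ⇑(monomialChar F p.1 p.2)) '' s)) = #s := by
  rw [Set.image_eq_range, finrank_span_eq_card ((linearIndepOn_monomialChar F).mono hs)]
  simp

end monomialChar

section toricCode

variable {F : Type*} [Field F] [Fintype F] {r : ℕ}

theorem toricCode_eq_span (hr : 0 < r) (b : ℕ) :
    toricCode F r b = Submodule.span F ((fun p : ℕ × ℕ => ⇑(monomialChar F p.1 p.2)) ''
      latticePoints r (Fintype.card F - 2) (r * b + (Fintype.card F - 2))) := by
  unfold toricCode
  congr 1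
  ext f
  simp only [Set.mem_ofPred_eq, Set.mem_image, mem_coe, mem_latticePoints hr, Prod.exists]
  constructor
  · rintro ⟨i, j, hj, hij, rfl⟩
    exact ⟨i, j, ⟨hj, hij⟩, rfl⟩
  · rintro ⟨i, j, ⟨hj, hij⟩, rfl⟩
    exact ⟨i, j, hj, hij, rfl⟩

theorem finrank_toricCode (hr : 0 < r) {b : ℕ}
    (ha : b + (Fintype.card F - 2) / r ≤ Fintype.card F - 2) :
    Module.finrank F (toricCode F r b) =
      #(latticePoints r (Fintype.card F - 2) (r * b + (Fintype.card F - 2))) := by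
  rw [toricCode_eq_span hr, finrank_span_monomialChar]
  rintro ⟨i, j⟩ hp
  simp only [mem_coe, mem_latticePoints hr] at hp
  have hq : 1 < Fintype.card F := Fintype.one_lt_card
  have hi : i ≤ b + (Fintype.card F - 2) / r := by
    rw [← Nat.mul_add_div hr, Nat.le_div_iff_mul_le hr, mul_comm]
    omega
  constructor <;> omega

end toricCode

/-- Let `q` be a prime power, `r` a positive integer dividing `q-2`,
and `b` an integer with `0 ≤ b` and `a := b + (q-2)/r ≤ q-2`.  The toric code `C_b`
has length `(q-1)²` and dimension `(1/2)·((q-2)/r + 1)·q + b·(q-1)` (the number of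
lattice points of `□_b`). -/
theorem toricCode_length_and_dim
    {F : Type*} [Field F] [Fintype F] (q : ℕ) (hq : q = Fintype.card F)
    (r b : ℕ) (hr : 0 < r) (hdvd : r ∣ (q - 2))
    (ha : b + (q - 2) / r ≤ q - 2) :
    Nat.card (Fˣ × Fˣ) = (q - 1) ^ 2 ∧
    ((Module.finrank F (toricCode F r b) : ℚ)
      = (1 / 2) * (((q : ℚ) - 2) / (r : ℚ) + 1) * (q : ℚ)
        + (b : ℚ) * ((q : ℚ) - 1)) := by
  subst hq
  refine ⟨by rw [Nat.card_prod, Nat.card_units, Nat.card_eq_fintype_card, sq], ?_⟩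
  obtain ⟨s, hs⟩ := hdvd
  have hq : Fintype.card F = r * s + 2 := by
    have := Fintype.one_lt_card (α := F)
    omega
  have hcount : (2 * #(latticePoints r (r * s) (r * (s + b))) : ℚ) =
      (s + 1) * (r * s + 2) + 2 * b * (r * s + 1) := by
    exact_mod_cast two_mul_card_latticePoints hr s b
  have hr' : (r : ℚ) ≠ 0 := by exact_mod_cast hr.ne'
  rw [finrank_toricCode hr ha, hs, ← mul_add, add_comm b, hq]
  push_cast
  rw [add_sub_cancel_right, mul_div_cancel_left₀ _ hr']
  linear_combination hcount / 2
end

section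
/- Let f ∈ 𝔽_q[X,Y] be a nonzero polynomial all of whose monomials X^i Y^j satisfy i ≥ 0, j ≥ 0 and r·i + j ≤ q−2 (i.e. the support of f lies in the lattice points of □_0). If there are A pairwise distinct elements c₁, …, c_A ∈ 𝔽_q^* such that f(c_k, y) = 0 for all y ∈ 𝔽_q^* and all k, then A ≤ (q−2)/r. -/
/-!
Read `f` as a polynomial of degree at most `(q-2)/r` in `X` and at most `q-2` in `Y`.
If `A > (q-2)/r`, then `f` vanishes on the grid `{c₁, …, c_A} × 𝔽_q^*`, whose sides exceed
these two degrees, so `f = 0` by the Combinatorial Nullstellensatz.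
-/

open MvPolynomial Finset

theorem MvPolynomial.eq_zero_of_eval_zero_on_grid {R : Type*} [CommRing R] [IsDomain R]
    (f : MvPolynomial (Fin 2) R) (s t : Finset R)
    (hs : f.degreeOf 0 < #s) (ht : f.degreeOf 1 < #t)
    (h : ∀ a ∈ s, ∀ b ∈ t, eval ![a, b] f = 0) : f = 0 := by
  refine eq_zero_of_eval_zero_at_prod_finset f ![s, t] (fun i => by fin_cases i <;> assumption)
    fun x hx => ?_
  have hx_eq : x = ![x 0, x 1] := by
    funext i
    fin_cases i <;> rfl
  rw [hx_eq]
  exact h _ (hx 0) _ (hx 1)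

theorem card_vanishing_strata_le_general
    {F : Type*} [Field F] [Fintype F] (q : ℕ) (hq : q = Fintype.card F)
    (r : ℕ) (hr : 0 < r)
    (f : MvPolynomial (Fin 2) F) (hf : f ≠ 0)
    (hsupp : ∀ m ∈ f.support, r * m 0 + m 1 ≤ q - 2)
    (A : ℕ) (c : Fin A → Fˣ) (hc : Function.Injective c)
    (hzero : ∀ k : Fin A, ∀ y : Fˣ,
      MvPolynomial.eval ![(c k : F), (y : F)] f = 0) :
    A ≤ (q - 2) / r := by
  classical
  by_contra! hA
  have hdeg_X : f.degreeOf 0 ≤ (q - 2) / r := degreeOf_le_iff.mpr fun m hm =>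
    (Nat.le_div_iff_mul_le hr).mpr <| (Nat.mul_comm _ _).trans_le <|
      (Nat.le_add_right _ _).trans (hsupp m hm)
  have hdeg_Y : f.degreeOf 1 ≤ q - 2 := degreeOf_le_iff.mpr fun m hm =>
    (Nat.le_add_left _ _).trans (hsupp m hm)
  have hq_two : 2 ≤ q := hq ▸ Fintype.one_lt_card
  have hcard_c : #(univ.image fun k => (c k : F)) = A := by
    rw [card_image_of_injective (f := fun k => (c k : F)) _ (Units.val_injective.comp hc),
      card_univ, Fintype.card_fin]
  have hcard_units : #(univ.erase (0 : F)) = q - 1 := by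
    rw [card_erase_of_mem (mem_univ _), card_univ, hq]
  refine hf (eq_zero_of_eval_zero_on_grid f (univ.image fun k => (c k : F))
    (univ.erase 0) (by omega) (by omega) ?_)
  intro a ha b hb
  obtain ⟨k, -, rfl⟩ := mem_image.mp ha
  exact hzero k (Units.mk0 b (ne_of_mem_erase hb))

/-- Let `q` be a prime power, `F = 𝔽_q`, and `r` a positive integer
dividing `q-2`.  Let `f ∈ 𝔽_q[X,Y]` be a nonzero polynomial all of whose monomials
`X^i Y^j` satisfy `i ≥ 0`, `j ≥ 0` and `r·i + j ≤ q-2` (the support of `f` lies in the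
lattice points of `□_0`).  If there are `A` pairwise distinct elements
`c₁, …, c_A ∈ 𝔽_q^*` such that `f(c_k, y) = 0` for all `y ∈ 𝔽_q^*` and all `k`,
then `A ≤ (q-2)/r`. -/
theorem card_vanishing_strata_le
    {F : Type*} [Field F] [Fintype F] (q : ℕ) (hq : q = Fintype.card F)
    (r : ℕ) (hr : 0 < r) (hdvd : r ∣ (q - 2))
    (f : MvPolynomial (Fin 2) F) (hf : f ≠ 0)
    (hsupp : ∀ m ∈ f.support, r * m 0 + m 1 ≤ q - 2)
    (A : ℕ) (c : Fin A → Fˣ) (hc : Function.Injective c)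
    (hzero : ∀ k : Fin A, ∀ y : Fˣ,
      MvPolynomial.eval ![(c k : F), (y : F)] f = 0) :
    A ≤ (q - 2) / r :=
  card_vanishing_strata_le_general q hq r hr f hf hsupp A c hc hzero
end

section
/- Let f ∈ 𝔽_q[X,Y] be a nonzero polynomial all of whose monomials X^i Y^j satisfy i ≥ 0, j ≥ 0 and r·i + j ≤ q−2 (i.e. the support of f lies in the lattice points of □_0). Suppose c₁, …, c_A ∈ 𝔽_q^* are exactly the pairwise distinct elements c of 𝔽_q^* such that f(c, y) = 0 for all y ∈ 𝔽_q^*. Then for every other c' ∈ 𝔽_q^* (c' ∉ {c₁, …, c_A}), the number of y ∈ 𝔽_q^* with f(c', y) = 0 is at most q − 2 − A·r. Consequently f has at most A(q−1) + (q−1−A)(q−2−Ar) zeros in 𝔽_q^* × 𝔽_q^*. -/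
/-!
Write `f = ∑ⱼ aⱼ(X) Yʲ`; the support condition says `r · deg aⱼ + j ≤ q - 2`. Every column
`f(c, Y)` has degree at most `q - 2 < |𝔽_q^*|`, so it vanishes on `𝔽_q^*` only if it is the zero
polynomial, i.e. only if `c` is a common root of all the `aⱼ`. Hence each nonzero `aⱼ` has at
least the `A` roots `c₁, …, c_A`, so `A r + j ≤ q - 2`: every column has degree at most
`q - 2 - A r`, which bounds the zeros on a column that does not vanish. Summing over the columns
gives the total count.
-/

open Polynomial Bivariate

namespace Polynomial.Bivariate

variable {R : Type*} [CommSemiring R]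

lemma equivMvPolynomial_symm_monomial (m : Fin 2 →₀ ℕ) (a : R) :
    (equivMvPolynomial R).symm (MvPolynomial.monomial m a) = monomial (m 1) (monomial (m 0) a) := by
  rw [MvPolynomial.monomial_eq, Finsupp.prod_fintype _ _ (by simp), Fin.prod_univ_two]
  simp [← C_mul_X_pow_eq_monomial, mul_assoc]

lemma coeff_coeff_equivMvPolynomial_symm (f : MvPolynomial (Fin 2) R) (i j : ℕ) :
    (((equivMvPolynomial R).symm f).coeff j).coeff i
      = f.coeff (Finsupp.single 0 i + Finsupp.single 1 j) := by
  induction f using MvPolynomial.induction_on' with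
  | monomial m a =>
    have hm : m = Finsupp.single 0 i + Finsupp.single 1 j ↔ m 0 = i ∧ m 1 = j := by
      refine ⟨by rintro rfl; simp, fun ⟨h0, h1⟩ => ?_⟩
      ext k; fin_cases k <;> simp [h0, h1]
    rw [equivMvPolynomial_symm_monomial, MvPolynomial.coeff_monomial, coeff_monomial]
    simp only [hm]
    split_ifs <;> simp_all [coeff_monomial]
  | add f g hf hg => simp [hf, hg]

lemma evalEval_equivMvPolynomial_symm (f : MvPolynomial (Fin 2) R) (x y : R) :
    ((equivMvPolynomial R).symm f).evalEval x y = MvPolynomial.eval ![x, y] f := by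
  induction f using MvPolynomial.induction_on with
  | C a => simp
  | add f g hf hg => simp [hf, hg]
  | mul_X f i hf => fin_cases i <;> simp [hf, evalEval_C]

/-- Here `(p.coeff j).coeff i` is the coefficient of `XⁱYʲ`. -/
def WeightedDegreeLE (r d : ℕ) (p : R[X][Y]) : Prop :=
  ∀ i j, (p.coeff j).coeff i ≠ 0 → r * i + j ≤ d

theorem WeightedDegreeLE.natDegree_le {r d : ℕ} {p : R[X][Y]} (hp : WeightedDegreeLE r d p) :
    p.natDegree ≤ d := by
  rw [natDegree_le_iff_coeff_eq_zero]
  intro j hj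
  by_contra h
  have := hp _ j (leadingCoeff_ne_zero.mpr h)
  omega

end Polynomial.Bivariate

namespace Polynomial

variable {R : Type*} [CommRing R] [IsDomain R]

theorem card_le_natDegree_of_eval_eq_zero {p : R[X]} (hp : p ≠ 0) {ι : Type*} [Fintype ι]
    {f : ι → R} (hf : Function.Injective f) (heval : ∀ i, p.eval (f i) = 0) :
    Fintype.card ι ≤ p.natDegree :=
  not_lt.mp fun h => hp (eq_zero_of_natDegree_lt_card_of_eval_eq_zero p hf heval h)

theorem ncard_setOf_eval_eq_zero_le_natDegree {p : R[X]} (hp : p ≠ 0) {α : Type*} [Finite α]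
    {g : α → R} (hg : Function.Injective g) : {a | p.eval (g a) = 0}.ncard ≤ p.natDegree := by
  have := Fintype.ofFinite α
  classical
  rw [← Nat.card_coe_set_eq, Nat.card_eq_fintype_card]
  exact card_le_natDegree_of_eval_eq_zero hp (hg.comp Subtype.val_injective) fun a => a.2

namespace Bivariate

variable {r d : ℕ} {p : R[X][Y]}

theorem WeightedDegreeLE.natDegree_map_evalRingHom_add_le (hp : WeightedDegreeLE r d p)
    {ι : Type*} [Fintype ι] {c : ι → R} (hc : Function.Injective c)
    (hvan : ∀ k, p.map (evalRingHom (c k)) = 0) {u : R} (hu : p.map (evalRingHom u) ≠ 0) :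
    (p.map (evalRingHom u)).natDegree + Fintype.card ι * r ≤ d := by
  set j := (p.map (evalRingHom u)).natDegree
  have hlead : (p.coeff j).eval u ≠ 0 := by
    rw [← coe_evalRingHom, ← coeff_map]; exact leadingCoeff_ne_zero.mpr hu
  have hj : p.coeff j ≠ 0 := fun h => hlead (by rw [h, eval_zero])
  have hroots : ∀ k, (p.coeff j).eval (c k) = 0 := fun k => by
    rw [← coe_evalRingHom, ← coeff_map, hvan k, coeff_zero]
  have hcard := card_le_natDegree_of_eval_eq_zero hj hc hroots
  have hw := hp _ j (leadingCoeff_ne_zero.mpr hj)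
  calc j + Fintype.card ι * r ≤ j + (p.coeff j).natDegree * r := by gcongr
    _ ≤ d := by rw [mul_comm]; omega

theorem WeightedDegreeLE.ncard_setOf_evalEval_eq_zero_add_le (hp : WeightedDegreeLE r d p)
    {ι : Type*} [Fintype ι] {c : ι → R} (hc : Function.Injective c)
    (hvan : ∀ k, p.map (evalRingHom (c k)) = 0) {u : R} (hu : p.map (evalRingHom u) ≠ 0)
    {α : Type*} [Finite α] {g : α → R} (hg : Function.Injective g) :
    {a | p.evalEval u (g a) = 0}.ncard + Fintype.card ι * r ≤ d := by
  have hroots := ncard_setOf_eval_eq_zero_le_natDegree hu hg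
  simp only [map_evalRingHom_eval] at hroots
  have := hp.natDegree_map_evalRingHom_add_le hc hvan hu
  omega

theorem WeightedDegreeLE.map_evalRingHom_eq_zero_iff {F : Type*} [Field F] [Fintype F]
    {p : F[X][Y]} (hp : WeightedDegreeLE r (Fintype.card F - 2) p) (u : F) :
    p.map (evalRingHom u) = 0 ↔ ∀ y : Fˣ, p.evalEval u y = 0 := by
  classical
  refine ⟨fun h y => by rw [← map_evalRingHom_eval, h, eval_zero], fun h => ?_⟩
  refine eq_zero_of_natDegree_lt_card_of_eval_eq_zero _ Units.val_injective
    (fun y => (map_evalRingHom_eval _ _ _).trans (h y)) ?_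
  have : (p.map (evalRingHom u)).natDegree ≤ p.natDegree := natDegree_map_le
  have := hp.natDegree_le
  have := Fintype.card_units F
  have : 1 < Fintype.card F := Fintype.one_lt_card
  omega

end Bivariate

end Polynomial

theorem Set.ncard_setOf_prod_eq_sum {α β : Type*} [Fintype α] [Fintype β] (P : α → β → Prop) :
    {t : α × β | P t.1 t.2}.ncard = ∑ a, {b | P a b}.ncard := by
  classical
  simp only [Set.ncard_eq_toFinset_card', Set.toFinset_ofPred, Finset.card_filter,
    Fintype.sum_prod_type]

theorem Finset.sum_le_card_mul_add_of_le_on_range {α ι : Type*} [Fintype α] [Fintype ι]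
    {c : ι → α} (hc : Function.Injective c) {g : α → ℤ} {a b : ℤ}
    (ha : ∀ k, g (c k) ≤ a) (hb : ∀ u ∉ Set.range c, g u ≤ b) :
    ∑ u, g u ≤ Fintype.card ι * a + (Fintype.card α - Fintype.card ι) * b := by
  classical
  set S := univ.filter (· ∈ Set.range c)
  set T := univ.filter (· ∉ Set.range c)
  have hS : S.card = Fintype.card ι := by
    rw [show S = univ.image c by ext; simp [S], card_image_of_injective _ hc, card_univ]
  have hT : (T.card : ℤ) = Fintype.card α - Fintype.card ι := by
    have : S.card + T.card = Fintype.card α := card_filter_add_card_filter_not _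
    omega
  calc ∑ u, g u = ∑ u ∈ S, g u + ∑ u ∈ T, g u := (sum_filter_add_sum_filter_not _ _ _).symm
    _ ≤ ∑ u ∈ S, a + ∑ u ∈ T, b := by
      gcongr with u hu u hu
      · obtain ⟨k, rfl⟩ := (mem_filter.mp hu).2
        exact ha k
      · exact hb u (mem_filter.mp hu).2
    _ = _ := by simp only [sum_const, nsmul_eq_mul, hS, hT]

theorem zeros_on_strata_and_total_zeros_bound_general
    {F : Type*} [Field F] [Fintype F] (q : ℕ) (hq : q = Fintype.card F)
    (r : ℕ)
    (f : MvPolynomial (Fin 2) F)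
    (hsupp : ∀ m ∈ f.support, r * m 0 + m 1 ≤ q - 2)
    (A : ℕ) (c : Fin A → Fˣ) (hc : Function.Injective c)
    (hexact : ∀ u : Fˣ,
      (∀ y : Fˣ, MvPolynomial.eval ![(u : F), (y : F)] f = 0) ↔ ∃ k, c k = u) :
    (∀ u : Fˣ, (¬ ∃ k, c k = u) →
      (({y : Fˣ | MvPolynomial.eval ![(u : F), (y : F)] f = 0}.ncard : ℤ)
        ≤ (q : ℤ) - 2 - (A : ℤ) * (r : ℤ))) ∧
    (({t : Fˣ × Fˣ | MvPolynomial.eval ![(t.1 : F), (t.2 : F)] f = 0}.ncard : ℤ)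
      ≤ (A : ℤ) * ((q : ℤ) - 1)
        + ((q : ℤ) - 1 - (A : ℤ)) * ((q : ℤ) - 2 - (A : ℤ) * (r : ℤ))) := by
  classical
  subst hq
  set p := (equivMvPolynomial F).symm f
  have hp : WeightedDegreeLE r (Fintype.card F - 2) p := fun i j h => by
    rw [coeff_coeff_equivMvPolynomial_symm] at h
    simpa using hsupp _ (MvPolynomial.mem_support_iff.mpr h)
  have hvan (k : Fin A) : p.map (evalRingHom (c k : F)) = 0 := by
    simpa [hp.map_evalRingHom_eq_zero_iff, p, evalEval_equivMvPolynomial_symm]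
      using (hexact (c k)).mpr ⟨k, rfl⟩
  have hrow (u : Fˣ) (hu : ¬ ∃ k, c k = u) :
      ({y : Fˣ | MvPolynomial.eval ![(u : F), (y : F)] f = 0}.ncard : ℤ)
        ≤ (Fintype.card F : ℤ) - 2 - (A : ℤ) * (r : ℤ) := by
    have hne : p.map (evalRingHom (u : F)) ≠ 0 := by
      simpa [hp.map_evalRingHom_eq_zero_iff, p, evalEval_equivMvPolynomial_symm, hexact] using hu
    have := hp.ncard_setOf_evalEval_eq_zero_add_le (Units.val_injective.comp hc) hvan hne
      Units.val_injective
    simp only [p, evalEval_equivMvPolynomial_symm, Fintype.card_fin] at this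
    have : 1 < Fintype.card F := Fintype.one_lt_card
    push_cast
    omega
  have hfib (u : Fˣ) : ({y : Fˣ | MvPolynomial.eval ![(u : F), (y : F)] f = 0}.ncard : ℤ)
      ≤ Fintype.card Fˣ := mod_cast Nat.card_eq_fintype_card (α := Fˣ) ▸ Set.ncard_le_card _
  refine ⟨hrow, ?_⟩
  rw [Set.ncard_setOf_prod_eq_sum fun u y : Fˣ => MvPolynomial.eval ![(u : F), (y : F)] f = 0]
  have := Finset.sum_le_card_mul_add_of_le_on_range hc (fun k => hfib (c k)) hrow
  rw [Fintype.card_fin, Fintype.card_units, Nat.cast_sub Fintype.card_pos] at this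
  exact_mod_cast this

/-- Let `q` be a prime power, `F = 𝔽_q`, and `r` a positive integer
dividing `q-2`.  Let `f ∈ 𝔽_q[X,Y]` be a nonzero polynomial all of whose monomials
`X^i Y^j` satisfy `i ≥ 0`, `j ≥ 0` and `r·i + j ≤ q-2` (the support of `f` lies in the
lattice points of `□_0`).  Suppose `c₁, …, c_A ∈ 𝔽_q^*` are exactly the pairwise
distinct elements `c` of `𝔽_q^*` such that `f(c, y) = 0` for all `y ∈ 𝔽_q^*`.
Then for every other `c' ∈ 𝔽_q^*` the number of `y ∈ 𝔽_q^*` with `f(c', y) = 0` is at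
most `q - 2 - A·r`; consequently `f` has at most `A(q-1) + (q-1-A)(q-2-Ar)` zeros
in `𝔽_q^* × 𝔽_q^*`. -/
theorem zeros_on_strata_and_total_zeros_bound
    {F : Type*} [Field F] [Fintype F] (q : ℕ) (hq : q = Fintype.card F)
    (r : ℕ) (hr : 0 < r) (hdvd : r ∣ (q - 2))
    (f : MvPolynomial (Fin 2) F) (hf : f ≠ 0)
    (hsupp : ∀ m ∈ f.support, r * m 0 + m 1 ≤ q - 2)
    (A : ℕ) (c : Fin A → Fˣ) (hc : Function.Injective c)
    (hexact : ∀ u : Fˣ,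
      (∀ y : Fˣ, MvPolynomial.eval ![(u : F), (y : F)] f = 0) ↔ ∃ k, c k = u) :
    (∀ u : Fˣ, (¬ ∃ k, c k = u) →
      (({y : Fˣ | MvPolynomial.eval ![(u : F), (y : F)] f = 0}.ncard : ℤ)
        ≤ (q : ℤ) - 2 - (A : ℤ) * (r : ℤ))) ∧
    (({t : Fˣ × Fˣ | MvPolynomial.eval ![(t.1 : F), (t.2 : F)] f = 0}.ncard : ℤ)
      ≤ (A : ℤ) * ((q : ℤ) - 1)
        + ((q : ℤ) - 1 - (A : ℤ)) * ((q : ℤ) - 2 - (A : ℤ) * (r : ℤ))) :=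
  zeros_on_strata_and_total_zeros_bound_general q hq r f hsupp A c hc hexact
end

section
/- The dual code of the toric code C_b with respect to the standard dot product on 𝔽_q^S is spanned by the evaluation vectors of the monomials whose reflected exponent does not lie in □_b: C_b^⊥ = span_{𝔽_q}{ v_{(k,l)} : 0 ≤ k,l ≤ q−2 and ((q−1−k) mod (q−1), (q−1−l) mod (q−1)) is not a lattice point of □_b }. -/
section Aux

variable {F : Type*} [Field F] [Fintype F] [DecidableEq F]

lemma units_pow_dvd (a : Fˣ) {n m : ℕ} (hn : Fintype.card Fˣ = n) (h : n ∣ m) :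
    (a : F) ^ m = 1 := by
  obtain ⟨c, rfl⟩ := h
  have h1 : a ^ n = 1 := by rw [← hn]; exact pow_card_eq_one
  rw [pow_mul, ← Units.val_pow_eq_pow_val, h1, Units.val_one, one_pow]

lemma refl_pow_eq (a : Fˣ) {n k : ℕ} (hn : Fintype.card Fˣ = n) (hk : k ≤ n) :
    (a : F) ^ ((n - k) % n) = ((a⁻¹ : Fˣ) : F) ^ k := by
  have hne : ((a : F)) ^ k ≠ 0 := pow_ne_zero _ (Units.ne_zero a)
  apply mul_right_cancel₀ hne
  have h1 : (a : F) ^ ((n - k) % n) * (a : F) ^ k = 1 := by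
    rw [← pow_add]
    apply units_pow_dvd a hn
    have h2 : (n - k) % n + k ≡ (n - k) + k [MOD n] :=
      (Nat.mod_modEq (n - k) n).add_right k
    rw [Nat.sub_add_cancel hk] at h2
    have h3 : (n - k) % n + k ≡ 0 [MOD n] := h2.trans (Nat.modEq_zero_iff_dvd.mpr dvd_rfl)
    exact (Nat.modEq_zero_iff_dvd).mp h3
  rw [h1]
  rw [← mul_pow]
  have : ((a⁻¹ : Fˣ) : F) * (a : F) = 1 := by
    rw [← Units.val_mul, inv_mul_cancel, Units.val_one]
  rw [this, one_pow]

lemma geo_sum {n : ℕ} (hn : Fintype.card Fˣ = n) (a t : Fˣ) :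
    ∑ k ∈ Finset.range n, (a : F) ^ ((n - k) % n) * (t : F) ^ k
      = if t = a then -1 else 0 := by
  have hterm : ∀ k ∈ Finset.range n, (a : F) ^ ((n - k) % n) * (t : F) ^ k
      = ((a⁻¹ * t : Fˣ) : F) ^ k := by
    intro k hk
    rw [refl_pow_eq a hn (le_of_lt (Finset.mem_range.mp hk)), Units.val_mul, mul_pow]
  rw [Finset.sum_congr rfl hterm]
  by_cases h : t = a
  · subst h
    simp only [inv_mul_cancel, Units.val_one, one_pow, Finset.sum_const,
      Finset.card_range, nsmul_eq_mul, mul_one]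
    rw [← hn, Fintype.card_units, Nat.cast_sub Fintype.card_pos,
      FiniteField.cast_card_eq_zero, Nat.cast_one, zero_sub]
    simp
  · rw [if_neg h]
    have hx : ((a⁻¹ * t : Fˣ) : F) ≠ 1 := by
      intro hcon
      apply h
      have : (a⁻¹ * t : Fˣ) = 1 := Units.ext (by simpa using hcon)
      have := mul_eq_one_iff_inv_eq.mp this
      simp at this
      exact this.symm
    rw [geom_sum_eq hx]
    rw [units_pow_dvd _ hn dvd_rfl, sub_self, zero_div]

lemma orth_sum {n : ℕ} (hn : Fintype.card Fˣ = n) (k l i j : ℕ) :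
    ∑ s : Fˣ × Fˣ, ((s.1 : F) ^ k * (s.2 : F) ^ l) * ((s.1 : F) ^ i * (s.2 : F) ^ j)
      = (if n ∣ k + i then (-1 : F) else 0) * (if n ∣ l + j then (-1 : F) else 0) := by
  classical
  rw [Fintype.sum_prod_type]
  have hterm : ∀ x y : Fˣ, ((x : F) ^ k * (y : F) ^ l) * ((x : F) ^ i * (y : F) ^ j)
      = (x : F) ^ (k + i) * (y : F) ^ (l + j) := by
    intro x y; rw [pow_add, pow_add]; ring
  simp_rw [hterm]
  rw [← Finset.sum_mul_sum]
  have h1 : ∑ x : Fˣ, (x : F) ^ (k + i) = if n ∣ k + i then (-1 : F) else 0 := by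
    have := FiniteField.sum_pow_units F (k + i)
    rw [← hn, Fintype.card_units]
    simpa using this
  have h2 : ∑ y : Fˣ, (y : F) ^ (l + j) = if n ∣ l + j then (-1 : F) else 0 := by
    have := FiniteField.sum_pow_units F (l + j)
    rw [← hn, Fintype.card_units]
    simpa using this
  rw [h1, h2]

lemma eq_refl_of_dvd {n k i : ℕ} (hk : k < n) (hi : i < n) (h : n ∣ k + i) :
    i = (n - k) % n := by
  obtain ⟨c, hc⟩ := h
  have hc2 : c < 2 := by
    by_contra hge
    push_neg at hge
    have := Nat.mul_le_mul_left n hge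
    omega
  interval_cases c
  · have h0 : k = 0 ∧ i = 0 := by omega
    simp [h0.1, h0.2, Nat.mod_self]
  · have h2 : (n - k) % n = n - k := Nat.mod_eq_of_lt (by omega)
    omega

/-- Fourier inversion: every function on `Fˣ × Fˣ` is the combination of monomial
vectors with coefficients given by pairing against reflected monomials. -/
lemma decomp {n : ℕ} (hn : Fintype.card Fˣ = n) (u : Fˣ × Fˣ → F) :
    u = ∑ p ∈ Finset.range n ×ˢ Finset.range n,
        (∑ s : Fˣ × Fˣ, u s * ((s.1 : F) ^ ((n - p.1) % n) * (s.2 : F) ^ ((n - p.2) % n))) •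
          (fun t : Fˣ × Fˣ => (t.1 : F) ^ p.1 * (t.2 : F) ^ p.2) := by
  classical
  funext t
  rw [Finset.sum_apply]
  simp only [Pi.smul_apply, smul_eq_mul]
  have step1 : ∀ p ∈ Finset.range n ×ˢ Finset.range n,
      (∑ s : Fˣ × Fˣ, u s * ((s.1 : F) ^ ((n - p.1) % n) * (s.2 : F) ^ ((n - p.2) % n)))
          * ((t.1 : F) ^ p.1 * (t.2 : F) ^ p.2)
      = ∑ s : Fˣ × Fˣ, u s * (((s.1 : F) ^ ((n - p.1) % n) * (t.1 : F) ^ p.1)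
          * ((s.2 : F) ^ ((n - p.2) % n) * (t.2 : F) ^ p.2)) := by
    intro p _
    rw [Finset.sum_mul]
    apply Finset.sum_congr rfl
    intro s _
    ring
  rw [Finset.sum_congr rfl step1, Finset.sum_comm]
  have step2 : ∀ s : Fˣ × Fˣ,
      ∑ p ∈ Finset.range n ×ˢ Finset.range n,
        u s * (((s.1 : F) ^ ((n - p.1) % n) * (t.1 : F) ^ p.1)
          * ((s.2 : F) ^ ((n - p.2) % n) * (t.2 : F) ^ p.2))
      = u s * ((if t.1 = s.1 then (-1 : F) else 0) * (if t.2 = s.2 then (-1 : F) else 0)) := by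
    intro s
    rw [← Finset.mul_sum]
    congr 1
    rw [Finset.sum_product, ← geo_sum hn s.1 t.1, ← geo_sum hn s.2 t.2, Finset.sum_mul_sum]
  rw [Finset.sum_congr rfl (fun s _ => step2 s)]
  have step3 : ∀ s : Fˣ × Fˣ,
      u s * ((if t.1 = s.1 then (-1 : F) else 0) * (if t.2 = s.2 then (-1 : F) else 0))
      = if s = t then u s else 0 := by
    intro s
    by_cases h1 : t.1 = s.1 <;> by_cases h2 : t.2 = s.2 <;>
      simp [h1, h2, Prod.ext_iff, eq_comm]
  rw [Finset.sum_congr rfl (fun s _ => step3 s), Finset.sum_ite_eq' Finset.univ t u, if_pos (Finset.mem_univ t)]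

end Aux

/-- Let `q` be a prime power, `r` a positive integer dividing `q-2`,
and `b` an integer with `0 ≤ b` and `a := b + (q-2)/r ≤ q-2`.  The dual code of the
toric code `C_b` with respect to the standard dot product on `𝔽_q^S` is spanned by the
evaluation vectors of the monomials whose reflected exponent does not lie in `□_b`:
`C_b^⊥ = span{ v_{(k,l)} : 0 ≤ k,l ≤ q-2` and
`((q-1-k) mod (q-1), (q-1-l) mod (q-1))` is not a lattice point of `□_b }`. -/
theorem dual_of_toricCode
    {F : Type*} [Field F] [Fintype F] [DecidableEq F]
    (q : ℕ) (hq : q = Fintype.card F)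
    (r b : ℕ) (hr : 0 < r) (hdvd : r ∣ (q - 2))
    (ha : b + (q - 2) / r ≤ q - 2) :
    {u : Fˣ × Fˣ → F | ∀ c ∈ toricCode F r b, ∑ s : Fˣ × Fˣ, u s * c s = 0}
      = ↑(Submodule.span F
          {f : Fˣ × Fˣ → F | ∃ k l : ℕ, k ≤ q - 2 ∧ l ≤ q - 2 ∧
            ¬((q - 1 - l) % (q - 1) ≤ q - 2 ∧
              r * ((q - 1 - k) % (q - 1)) + (q - 1 - l) % (q - 1)
                ≤ r * b + (q - 2)) ∧
            f = fun t : Fˣ × Fˣ => (t.1 : F) ^ k * (t.2 : F) ^ l}) := by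
  subst hq
  set q := Fintype.card F with hq
  have hq2 : 2 ≤ q := Fintype.one_lt_card
  set n := q - 1 with hn'
  have hn : Fintype.card Fˣ = n := by rw [hn']; exact Fintype.card_units F
  have hqn : q - 2 = n - 1 := by omega
  have hn1 : 1 ≤ n := by omega
  -- bound on first coordinate of lattice points of the polytope
  have hi_bound : ∀ i j : ℕ, r * i + j ≤ r * b + (q - 2) → i < n := by
    intro i j hij
    have h1 : r * i ≤ r * b + (q - 2) := by omega
    have h2 : r * b + (q - 2) = r * (b + (q - 2) / r) := by
      rw [Nat.mul_add, Nat.mul_div_cancel' hdvd]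
    have h3 : i ≤ b + (q - 2) / r := by
      rw [h2] at h1
      exact Nat.le_of_mul_le_mul_left h1 hr
    omega
  ext u
  simp only [Set.mem_setOf_eq, SetLike.mem_coe]
  constructor
  · -- dual condition implies membership in span
    intro hu
    rw [decomp hn u]
    apply Submodule.sum_mem
    intro p hp
    rw [Finset.mem_product, Finset.mem_range, Finset.mem_range] at hp
    by_cases hbox : ((q - 1 - p.2) % (q - 1) ≤ q - 2 ∧
        r * ((q - 1 - p.1) % (q - 1)) + (q - 1 - p.2) % (q - 1) ≤ r * b + (q - 2))
    · -- reflected point in the polytope: coefficient vanishes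
      have hc : (fun t : Fˣ × Fˣ =>
          (t.1 : F) ^ ((n - p.1) % n) * (t.2 : F) ^ ((n - p.2) % n)) ∈ toricCode F r b :=
        Submodule.subset_span ⟨(n - p.1) % n, (n - p.2) % n, hbox.1, hbox.2, rfl⟩
      have := hu _ hc
      rw [this, zero_smul]
      exact Submodule.zero_mem _
    · exact Submodule.smul_mem _ _ (Submodule.subset_span
        ⟨p.1, p.2, by omega, by omega, hbox, rfl⟩)
  · -- membership in span implies dual condition
    intro hu
    induction hu using Submodule.span_induction with
    | zero => intro c _; simp
    | add x y hx hy ihx ihy =>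
      intro c hc
      have : ∀ s : Fˣ × Fˣ, (x + y) s * c s = x s * c s + y s * c s := by
        intro s; simp [add_mul]
      rw [Finset.sum_congr rfl (fun s _ => this s), Finset.sum_add_distrib,
        ihx c hc, ihy c hc, add_zero]
    | smul a x hx ihx =>
      intro c hc
      have : ∀ s : Fˣ × Fˣ, (a • x) s * c s = a * (x s * c s) := by
        intro s; simp [mul_assoc]
      rw [Finset.sum_congr rfl (fun s _ => this s), ← Finset.mul_sum, ihx c hc, mul_zero]
    | mem x hx =>
      obtain ⟨k, l, hk, hl, hnot, rfl⟩ := hx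
      intro c hc
      induction hc using Submodule.span_induction with
      | zero => simp
      | add c d hc hd ihc ihd =>
        have : ∀ s : Fˣ × Fˣ, ((fun t : Fˣ × Fˣ => (t.1 : F) ^ k * (t.2 : F) ^ l) s)
            * (c + d) s = ((fun t : Fˣ × Fˣ => (t.1 : F) ^ k * (t.2 : F) ^ l) s) * c s
              + ((fun t : Fˣ × Fˣ => (t.1 : F) ^ k * (t.2 : F) ^ l) s) * d s := by
          intro s; simp [mul_add]
        rw [Finset.sum_congr rfl (fun s _ => this s), Finset.sum_add_distrib, ihc, ihd, add_zero]
      | smul a c hc ihc =>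
        have : ∀ s : Fˣ × Fˣ, ((fun t : Fˣ × Fˣ => (t.1 : F) ^ k * (t.2 : F) ^ l) s)
            * (a • c) s = a * (((fun t : Fˣ × Fˣ => (t.1 : F) ^ k * (t.2 : F) ^ l) s) * c s) := by
          intro s; simp [Pi.smul_apply, smul_eq_mul]; ring
        rw [Finset.sum_congr rfl (fun s _ => this s), ← Finset.mul_sum, ihc, mul_zero]
      | mem c hcmem =>
        obtain ⟨i, j, hj, hij, rfl⟩ := hcmem
        rw [orth_sum hn k l i j]
        have hin : i < n := hi_bound i j hij
        have hjn : j < n := by omega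
        have hkn : k < n := by omega
        have hln : l < n := by omega
        by_cases h1 : n ∣ k + i
        · by_cases h2 : n ∣ l + j
          · exfalso
            apply hnot
            have e1 : i = (n - k) % n := eq_refl_of_dvd hkn hin h1
            have e2 : j = (n - l) % n := eq_refl_of_dvd hln hjn h2
            rw [hn'] at e1 e2
            refine ⟨?_, ?_⟩
            · rw [← e2]; omega
            · rw [← e1, ← e2]; exact hij
          · rw [if_neg h2, mul_zero]
        · rw [if_neg h1, zero_mul]
end

section
/- Let b₁, b₂ be integers with 0 ≤ b_i ≤ (r−1)(q−2)/r for i = 1,2 and b₁ + b₂ ≥ (r−1)(q−2)/r + 1. Then the dual toric codes are nested in the toric codes: C_{b₂}^⊥ ⊆ C_{b₁} and C_{b₁}^⊥ ⊆ C_{b₂}, where duals are taken with respect to the standard dot product on 𝔽_q^S. (The paper states this nesting under the hypothesis b₁ + b₂ ≥ (r−1)(q−2)/r.) -/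
open Finset

theorem inv_pow_eq_pow_card_sub_mod {G : Type*} [Group G] [Fintype G] (t : G) {k : ℕ}
    (hk : k ≤ Fintype.card G) : t⁻¹ ^ k = t ^ ((Fintype.card G - k) % Fintype.card G) := by
  rw [pow_mod_card, inv_pow, eq_comm, eq_inv_iff_mul_eq_one, pow_sub_mul_pow _ hk,
    pow_card_eq_one]

/-- The reflection `(k, l) ↦ (-k, -l) mod (m + 1)` maps the points of `[0, m]²` outside `□_{b₁}`
into `□_{b₂}`. -/
theorem mul_add_le_or_mul_mod_add_mod_le {r m b₁ b₂ k l : ℕ}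
    (hsum : r * (m + 1) ≤ r * (b₁ + b₂) + m) (hk : k ≤ m) (hl : l ≤ m) :
    r * k + l ≤ r * b₁ + m ∨
      r * ((m + 1 - k) % (m + 1)) + (m + 1 - l) % (m + 1) ≤ r * b₂ + m := by
  rcases Nat.eq_zero_or_pos k with rfl | hk₀
  · left
    omega
  rw [Nat.mod_eq_of_lt (by omega : m + 1 - k < m + 1)]
  have hσl : (m + 1 - l) % (m + 1) ≤ m + 1 - l := Nat.mod_le _ _
  by_contra! h
  obtain ⟨h₁, h₂⟩ := h
  zify [hk, hl, (by omega : k ≤ m + 1), (by omega : l ≤ m + 1)] at *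
  linarith

theorem mul_add_one_le_of_div_add_one_le {r m s : ℕ} (hdvd : r ∣ m)
    (h : (r - 1) * m / r + 1 ≤ s) : r * (m + 1) ≤ r * s + m := by
  rcases r with _ | r
  · simp [zero_dvd_iff.1 hdvd]
  · rw [Nat.add_sub_cancel] at h
    have hdiv : (r + 1) * (r * m / (r + 1)) = r * m := Nat.mul_div_cancel' (hdvd.mul_left r)
    calc (r + 1) * (m + 1) = (r + 1) * (r * m / (r + 1) + 1) + m := by
          rw [mul_add (r + 1) (r * m / (r + 1)) 1, hdiv]; ring
      _ ≤ (r + 1) * s + m := by gcongr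

section

variable {F : Type*} [Field F] [Fintype F]

variable (F) in
def unitsMonomial (i j : ℕ) (t : Fˣ × Fˣ) : F := (t.1 : F) ^ i * (t.2 : F) ^ j

theorem unitsMonomial_mem_toricCode {r b i j : ℕ} (hj : j ≤ Fintype.card F - 2)
    (h : r * i + j ≤ r * b + (Fintype.card F - 2)) : unitsMonomial F i j ∈ toricCode F r b :=
  Submodule.subset_span ⟨i, j, hj, h, rfl⟩

variable [DecidableEq F]

namespace FiniteField

theorem cast_card_units : (Fintype.card Fˣ : F) = -1 := by
  rw [Fintype.card_units, Nat.cast_sub Fintype.card_pos, cast_card_eq_zero, zero_sub,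
    Nat.cast_one]

theorem sum_range_card_units_pow_of_ne_one {a : Fˣ} (ha : a ≠ 1) :
    ∑ k ∈ range (Fintype.card Fˣ), (a : F) ^ k = 0 := by
  rw [geom_sum_eq (Units.val_eq_one.not.mpr ha), ← Units.val_pow_eq_pow_val, pow_card_eq_one,
    Units.val_one, sub_self, zero_div]

theorem sum_range_card_units_inv_pow_mul_pow (t s : Fˣ) :
    ∑ k ∈ range (Fintype.card Fˣ), ((t⁻¹ : Fˣ) : F) ^ k * (s : F) ^ k =
      if t = s then -1 else 0 := by
  simp_rw [← mul_pow, ← Units.val_mul]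
  split_ifs with h
  · simp [h, cast_card_units]
  · exact sum_range_card_units_pow_of_ne_one (by rwa [ne_eq, inv_mul_eq_one])

theorem eq_sum_inv_pow_mul_pow (u : Fˣ × Fˣ → F) (s : Fˣ × Fˣ) :
    u s = ∑ k ∈ range (Fintype.card Fˣ), ∑ l ∈ range (Fintype.card Fˣ),
      (∑ t, u t * (((t.1⁻¹ : Fˣ) : F) ^ k * ((t.2⁻¹ : Fˣ) : F) ^ l)) *
        ((s.1 : F) ^ k * (s.2 : F) ^ l) := by
  symm
  calc _ = ∑ t : Fˣ × Fˣ,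
        u t * (∑ k ∈ range (Fintype.card Fˣ), ((t.1⁻¹ : Fˣ) : F) ^ k * (s.1 : F) ^ k) *
          (∑ l ∈ range (Fintype.card Fˣ), ((t.2⁻¹ : Fˣ) : F) ^ l * (s.2 : F) ^ l) := by
        simp_rw [mul_assoc, sum_mul_sum, mul_sum, sum_mul]
        rw [eq_comm, sum_comm]
        refine sum_congr rfl fun k _ => ?_
        rw [sum_comm]
        exact sum_congr rfl fun l _ => sum_congr rfl fun t _ => by ring
    _ = u s := by
        simp only [sum_range_card_units_inv_pow_mul_pow]
        rw [Fintype.sum_eq_single s fun t ht => ?_]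
        · simp
        · obtain h | h : t.1 ≠ s.1 ∨ t.2 ≠ s.2 := by
            contrapose! ht
            exact Prod.ext ht.1 ht.2
          all_goals simp [h]

end FiniteField

theorem eq_sum_smul_unitsMonomial (u : Fˣ × Fˣ → F) :
    u = ∑ k ∈ range (Fintype.card Fˣ), ∑ l ∈ range (Fintype.card Fˣ),
      (∑ t, u t * unitsMonomial F ((Fintype.card Fˣ - k) % Fintype.card Fˣ)
        ((Fintype.card Fˣ - l) % Fintype.card Fˣ) t) • unitsMonomial F k l := by
  ext s
  rw [FiniteField.eq_sum_inv_pow_mul_pow u s]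
  simp only [Finset.sum_apply, Pi.smul_apply, smul_eq_mul, unitsMonomial]
  refine sum_congr rfl fun k hk => sum_congr rfl fun l hl => ?_
  simp only [← Units.val_pow_eq_pow_val, inv_pow_eq_pow_card_sub_mod _ (mem_range.1 hk).le,
    inv_pow_eq_pow_card_sub_mod _ (mem_range.1 hl).le]

theorem mem_of_forall_unitsMonomial_mem_or {C : Submodule F (Fˣ × Fˣ → F)} {u : Fˣ × Fˣ → F}
    (h : ∀ k < Fintype.card Fˣ, ∀ l < Fintype.card Fˣ, unitsMonomial F k l ∈ C ∨
      ∑ t, u t * unitsMonomial F ((Fintype.card Fˣ - k) % Fintype.card Fˣ)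
        ((Fintype.card Fˣ - l) % Fintype.card Fˣ) t = 0) :
    u ∈ C := by
  rw [eq_sum_smul_unitsMonomial u]
  refine sum_mem fun k hk => sum_mem fun l hl => ?_
  rcases h k (mem_range.1 hk) l (mem_range.1 hl) with hC | h₀
  · exact C.smul_mem _ hC
  · rw [h₀, zero_smul]
    exact C.zero_mem

theorem orthogonal_toricCode_subset_toricCode {r b₁ b₂ : ℕ}
    (hsum : r * (Fintype.card F - 2 + 1) ≤ r * (b₁ + b₂) + (Fintype.card F - 2)) :
    {u : Fˣ × Fˣ → F | ∀ c ∈ toricCode F r b₂, ∑ s, u s * c s = 0} ⊆ toricCode F r b₁ := by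
  intro u hu
  set m := Fintype.card F - 2
  have hcard : Fintype.card Fˣ = m + 1 := by
    have := Fintype.one_lt_card (α := F)
    rw [Fintype.card_units]
    omega
  refine mem_of_forall_unitsMonomial_mem_or fun k hk l hl => ?_
  rw [hcard] at hk hl ⊢
  have hσl : (m + 1 - l) % (m + 1) ≤ m := Nat.lt_succ_iff.1 (Nat.mod_lt _ m.succ_pos)
  rcases mul_add_le_or_mul_mod_add_mod_le hsum (Nat.lt_succ_iff.1 hk) (Nat.lt_succ_iff.1 hl)
    with h | h
  · exact .inl (unitsMonomial_mem_toricCode (Nat.lt_succ_iff.1 hl) h)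
  · exact .inr (hu _ (unitsMonomial_mem_toricCode hσl h))

end

theorem dual_toricCodes_nested_general
    {F : Type*} [Field F] [Fintype F] [DecidableEq F]
    (q : ℕ) (hq : q = Fintype.card F)
    (r : ℕ) (hdvd : r ∣ (q - 2))
    (b₁ b₂ : ℕ)
    (hsum : (r - 1) * (q - 2) / r + 1 ≤ b₁ + b₂) :
    {u : Fˣ × Fˣ → F | ∀ c ∈ toricCode F r b₂, ∑ s : Fˣ × Fˣ, u s * c s = 0}
        ⊆ ↑(toricCode F r b₁) ∧
    {u : Fˣ × Fˣ → F | ∀ c ∈ toricCode F r b₁, ∑ s : Fˣ × Fˣ, u s * c s = 0}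
        ⊆ ↑(toricCode F r b₂) := by
  subst hq
  have h := mul_add_one_le_of_div_add_one_le hdvd hsum
  exact ⟨orthogonal_toricCode_subset_toricCode h,
    orthogonal_toricCode_subset_toricCode (by rwa [add_comm b₂])⟩

/-- Let `q` be a prime power, `r` a positive integer dividing `q-2`,
and `b₁, b₂` integers with `0 ≤ bᵢ ≤ (r-1)(q-2)/r` and
`b₁ + b₂ ≥ (r-1)(q-2)/r + 1`.  Then the dual toric codes (with respect to the
standard dot product on `𝔽_q^S`) are nested in the toric codes:
`C_{b₂}^⊥ ⊆ C_{b₁}` and `C_{b₁}^⊥ ⊆ C_{b₂}`. -/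
theorem dual_toricCodes_nested
    {F : Type*} [Field F] [Fintype F] [DecidableEq F]
    (q : ℕ) (hq : q = Fintype.card F)
    (r : ℕ) (hr : 0 < r) (hdvd : r ∣ (q - 2))
    (b₁ b₂ : ℕ) (hb₁ : b₁ ≤ (r - 1) * (q - 2) / r) (hb₂ : b₂ ≤ (r - 1) * (q - 2) / r)
    (hsum : (r - 1) * (q - 2) / r + 1 ≤ b₁ + b₂) :
    {u : Fˣ × Fˣ → F | ∀ c ∈ toricCode F r b₂, ∑ s : Fˣ × Fˣ, u s * c s = 0}
        ⊆ ↑(toricCode F r b₁) ∧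
    {u : Fˣ × Fˣ → F | ∀ c ∈ toricCode F r b₁, ∑ s : Fˣ × Fˣ, u s * c s = 0}
        ⊆ ↑(toricCode F r b₂) :=
  dual_toricCodes_nested_general q hq r hdvd b₁ b₂ hsum
end
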